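/- arXiv:1001.4994 — 2 statements merged into one kernel-verified Lean document; each statement's English description precedes it below -/
import Mathlib

section
/- Let v̂(p) be the 2×2 matrix (indexed by ω, ω' ∈ {±1}) with entries v̂_{ω,ω'}(p) = ½[iω·Ĝ¹⁰(p) + iω'·Ĝ⁰¹(p) + Ĝ⁰⁰(p) − ωω'·Ĝ¹¹(p)], where Ĝ^{μν}(p) = δ^{μν}/(p²+μ²) − (1/(p²+μ²) − 1/(αp²+μ²−σ))·p^μp^ν/p². Then the inverse matrix satisfies (v̂⁻¹(p))_{ω,ω'} = (p²+μ²)δ_{ω,−ω'} − ½(1−α+σ/p²)[(p⁰)² − ωω'(p¹)² − i(ω+ω')p⁰p¹] for all p ≠ 0 with αp² + μ² − σ ≠ 0 and p² + μ² ≠ 0. -/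
/-- The components of `p ∈ ℝ²` as a function `Fin 2 → ℝ`. -/
def kvec (p : ℝ × ℝ) : Fin 2 → ℝ := ![p.1, p.2]

/-- `p² = (p⁰)² + (p¹)²`. -/
def ksq (p : ℝ × ℝ) : ℝ := p.1 ^ 2 + p.2 ^ 2

/-- The free meson propagator
`Ĝ^{μν}(p) = δ^{μν}/(p²+μ²) − (1/(p²+μ²) − 1/(αp²+μ²−σ)) p^μp^ν/p²`. -/
noncomputable def Ghat (α σ msq : ℝ) (p : ℝ × ℝ) (μ ν : Fin 2) : ℝ :=
  (if μ = ν then 1 else 0) / (ksq p + msq)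
    - (1 / (ksq p + msq) - 1 / (α * ksq p + msq - σ)) * kvec p μ * kvec p ν / ksq p

/-- `v̂_{ω,ω'}(p) = ½[iω Ĝ¹⁰(p) + iω' Ĝ⁰¹(p) + Ĝ⁰⁰(p) − ωω' Ĝ¹¹(p)]`. -/
noncomputable def vhat (α σ msq : ℝ) (p : ℝ × ℝ) (ω ω' : ℝ) : ℂ :=
  (1 / 2) * (Complex.I * (ω : ℂ) * ((Ghat α σ msq p 1 0 : ℝ) : ℂ)
    + Complex.I * (ω' : ℂ) * ((Ghat α σ msq p 0 1 : ℝ) : ℂ)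
    + ((Ghat α σ msq p 0 0 : ℝ) : ℂ)
    - (ω : ℂ) * (ω' : ℂ) * ((Ghat α σ msq p 1 1 : ℝ) : ℂ))

/-- The claimed explicit inverse
`(v̂⁻¹(p))_{ω,ω'} = (p²+μ²)δ_{ω,−ω'} − ½(1−α+σ/p²)[(p⁰)² − ωω'(p¹)² − i(ω+ω')p⁰p¹]`. -/
noncomputable def vinv (α σ msq : ℝ) (p : ℝ × ℝ) (ω ω' : ℝ) : ℂ :=
  ((ksq p + msq : ℝ) : ℂ) * (if ω' = -ω then 1 else 0)
    - (1 / 2) * ((1 - α + σ / ksq p : ℝ) : ℂ) *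
      ((p.1 : ℂ) ^ 2 - (ω : ℂ) * (ω' : ℂ) * (p.2 : ℂ) ^ 2
        - Complex.I * ((ω : ℂ) + (ω' : ℂ)) * (p.1 : ℂ) * (p.2 : ℂ))

/-! Write `z_ω = p⁰ + iωp¹` and let `J` be the matrix of `ω ↦ -ω`. Since `(1 - ωω')/2 = δ_{ω,-ω'}`,
both `v̂` and the claimed inverse are rank-one perturbations of multiples of `J`:
`v̂ = m⁻¹ J - a z zᵀ` and `v̂⁻¹ = m J - b z̄ z̄ᵀ` with `m = p² + μ²` and real `a`, `b`.
As `J z = z̄` and `J² = 1`, the product is `1 + (a b (z ⬝ z̄) - b/m - a m) z z̄ᵀ`, and the bracket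
vanishes because `z ⬝ z̄ = 2p²` and `(p² + μ²) - (αp² + μ² - σ) = (1 - α + σ/p²) p²`. -/

open Matrix Complex

theorem Matrix.smul_sub_vecMulVec_mul_smul_sub_vecMulVec_eq_one {n K : Type*} [Fintype n]
    [DecidableEq n] [Field K] {J : Matrix n n K} (hJJ : J * J = 1) (hJt : Jᵀ = J)
    {u v : n → K} (hJu : J *ᵥ u = v) {a b c : K} (hc : c ≠ 0)
    (h : a * b * (u ⬝ᵥ v) = b / c + a * c) :
    (c⁻¹ • J - a • vecMulVec u u) * (c • J - b • vecMulVec v v) = 1 := by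
  have hJv : J *ᵥ v = u := by rw [← hJu, mulVec_mulVec, hJJ, one_mulVec]
  have huJ : u ᵥ* J = v := by rw [← hJt, vecMul_transpose, hJu]
  have hcross : (a * b * (u ⬝ᵥ v) - b / c - a * c) • vecMulVec u v = 0 := by
    rw [h, add_sub_cancel_left, sub_self, zero_smul]
  rw [← sub_eq_zero, ← hcross]
  simp only [sub_mul, mul_sub, smul_mul_smul, mul_vecMulVec, vecMulVec_mulVec, op_smul_eq_smul,
    vecMulVec_mul, hJJ, hJv, huJ, inv_mul_cancel₀ hc, one_smul, smul_vecMulVec]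
  module

def pmOne : Fin 2 → ℝ := ![1, -1]

lemma pmOne_injective : Function.Injective pmOne := by
  intro i j h
  fin_cases i <;> fin_cases j <;> first | rfl | norm_num [pmOne] at h

lemma exists_pmOne_eq {ω : ℝ} (hω : ω ∈ ({1, -1} : Finset ℝ)) : ∃ i, pmOne i = ω := by
  rcases Finset.mem_insert.mp hω with rfl | hω
  · exact ⟨0, rfl⟩
  · exact ⟨1, (Finset.mem_singleton.mp hω).symm⟩

lemma sum_pmOne {M : Type*} [AddCommMonoid M] (f : ℝ → M) :
    ∑ s ∈ ({1, -1} : Finset ℝ), f s = ∑ i, f (pmOne i) := by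
  rw [Finset.sum_pair (by norm_num), Fin.sum_univ_two]
  rfl

def swapMatrix : Matrix (Fin 2) (Fin 2) ℂ := !![0, 1; 1, 0]

lemma swapMatrix_mul_self : swapMatrix * swapMatrix = 1 := by
  rw [swapMatrix, mul_fin_two, one_fin_two]
  norm_num

lemma swapMatrix_transpose : swapMatrixᵀ = swapMatrix := by
  ext i j
  fin_cases i <;> fin_cases j <;> rfl

def complexMomentum (p : ℝ × ℝ) : Fin 2 → ℂ := ![p.1 + I * p.2, p.1 - I * p.2]

lemma swapMatrix_mulVec_complexMomentum (p : ℝ × ℝ) :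
    swapMatrix *ᵥ complexMomentum p = star (complexMomentum p) := by
  ext i
  fin_cases i <;>
    simp [swapMatrix, complexMomentum, mulVec, dotProduct, Fin.sum_univ_two, sub_eq_add_neg]

lemma complexMomentum_dotProduct_star (p : ℝ × ℝ) :
    complexMomentum p ⬝ᵥ star (complexMomentum p) = ((2 * ksq p : ℝ) : ℂ) := by
  simp [complexMomentum, dotProduct, Fin.sum_univ_two, ksq]
  linear_combination (-2 * (p.2 : ℂ) ^ 2) * I_sq

lemma ksq_pos {p : ℝ × ℝ} (hp : p ≠ 0) : 0 < ksq p := by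
  obtain ⟨a, b⟩ := p
  have hab : a ≠ 0 ∨ b ≠ 0 := by
    contrapose! hp
    simp [hp]
  unfold ksq
  rcases hab with h | h <;> positivity

lemma propagator_coeff_identity {m n K B : ℝ} (hK : K ≠ 0) (hm : m ≠ 0) (hn : n ≠ 0)
    (hmn : m - n = B * K) :
    (1 / m - 1 / n) / K / 2 * (B / 2) * (2 * K) = B / 2 / m + (1 / m - 1 / n) / K / 2 * m := by
  field_simp
  linear_combination m * hmn

noncomputable def vhatMatrix (α σ msq : ℝ) (p : ℝ × ℝ) : Matrix (Fin 2) (Fin 2) ℂ :=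
  of fun i j => vhat α σ msq p (pmOne i) (pmOne j)

noncomputable def vinvMatrix (α σ msq : ℝ) (p : ℝ × ℝ) : Matrix (Fin 2) (Fin 2) ℂ :=
  of fun i j => vinv α σ msq p (pmOne i) (pmOne j)

lemma vhatMatrix_eq (α σ msq : ℝ) (p : ℝ × ℝ) :
    vhatMatrix α σ msq p = ((ksq p + msq : ℝ) : ℂ)⁻¹ • swapMatrix
      - (((1 / (ksq p + msq) - 1 / (α * ksq p + msq - σ)) / ksq p / 2 : ℝ) : ℂ) •
        vecMulVec (complexMomentum p) (complexMomentum p) := by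
  ext i j
  fin_cases i <;> fin_cases j <;>
    simp [vhatMatrix, vhat, Ghat, kvec, pmOne, swapMatrix, complexMomentum, vecMulVec] <;>
    ring_nf <;> simp only [I_sq] <;> ring

lemma vinvMatrix_eq (α σ msq : ℝ) (p : ℝ × ℝ) :
    vinvMatrix α σ msq p = ((ksq p + msq : ℝ) : ℂ) • swapMatrix
      - (((1 - α + σ / ksq p) / 2 : ℝ) : ℂ) •
        vecMulVec (star (complexMomentum p)) (star (complexMomentum p)) := by
  ext i j
  fin_cases i <;> fin_cases j <;>
    norm_num [vinvMatrix, vinv, pmOne, swapMatrix, complexMomentum, vecMulVec] <;>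
    ring_nf <;> simp only [I_sq] <;> ring

lemma vhatMatrix_mul_vinvMatrix {α σ msq : ℝ} {p : ℝ × ℝ} (hp : ksq p ≠ 0)
    (h1 : α * ksq p + msq - σ ≠ 0) (h2 : ksq p + msq ≠ 0) :
    vhatMatrix α σ msq p * vinvMatrix α σ msq p = 1 := by
  rw [vhatMatrix_eq, vinvMatrix_eq]
  refine smul_sub_vecMulVec_mul_smul_sub_vecMulVec_eq_one swapMatrix_mul_self
    swapMatrix_transpose (swapMatrix_mulVec_complexMomentum p) (by exact_mod_cast h2) ?_
  have hmn : ksq p + msq - (α * ksq p + msq - σ) = (1 - α + σ / ksq p) * ksq p := by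
    field_simp
    ring
  rw [complexMomentum_dotProduct_star]
  exact_mod_cast propagator_coeff_identity hp h2 h1 hmn

theorem stmt7_general (α σ msq : ℝ)
    (p : ℝ × ℝ) (hp : p ≠ 0) (h1 : α * ksq p + msq - σ ≠ 0) (h2 : ksq p + msq ≠ 0) :
    ∀ ω ∈ ({1, -1} : Finset ℝ), ∀ ω' ∈ ({1, -1} : Finset ℝ),
      (∑ s ∈ ({1, -1} : Finset ℝ), vhat α σ msq p ω s * vinv α σ msq p s ω')
        = (if ω = ω' then 1 else 0) ∧
      (∑ s ∈ ({1, -1} : Finset ℝ), vinv α σ msq p ω s * vhat α σ msq p s ω')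
        = (if ω = ω' then 1 else 0) := by
  have hVW := vhatMatrix_mul_vinvMatrix (ksq_pos hp).ne' h1 h2
  have hWV := mul_eq_one_comm.mp hVW
  intro ω hω ω' hω'
  obtain ⟨i, rfl⟩ := exists_pmOne_eq hω
  obtain ⟨j, rfl⟩ := exists_pmOne_eq hω'
  simp only [sum_pmOne, pmOne_injective.eq_iff]
  exact ⟨congrFun₂ hVW i j, congrFun₂ hWV i j⟩

/-- `vinv` is indeed the inverse matrix of `v̂(p)` on the index set `{+1,−1}`. -/
theorem stmt7 (α σ msq : ℝ) (hm : 0 < msq) (hσ : σ < msq) (hα : 0 < α)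
    (p : ℝ × ℝ) (hp : p ≠ 0) (h1 : α * ksq p + msq - σ ≠ 0) (h2 : ksq p + msq ≠ 0) :
    ∀ ω ∈ ({1, -1} : Finset ℝ), ∀ ω' ∈ ({1, -1} : Finset ℝ),
      (∑ s ∈ ({1, -1} : Finset ℝ), vhat α σ msq p ω s * vinv α σ msq p s ω')
        = (if ω = ω' then 1 else 0) ∧
      (∑ s ∈ ({1, -1} : Finset ℝ), vinv α σ msq p ω s * vhat α σ msq p s ω')
        = (if ω = ω' then 1 else 0) :=
  stmt7_general α σ msq p hp h1 h2
end

section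
/- Let v be a measurable function on ℝ² with ‖v‖_{L³} ≤ B₃·γ^{(4/3)M}, and for k ≤ i,j,p,... ≤ N let g^{(j)} satisfy ‖g^{(j)}‖_{L^∞} ≤ c γ^j, ‖g^{(j)}‖_{L¹} ≤ c γ^{-j}, ‖g^{(j)}‖_{L^{3/2}} ≤ c γ^{-j/3}. Then for every fixed z', w', u the triple-propagator loop obeys Σ_{j,q,p=k}^{N} ∫∫ dw du' |v(u'−z')| |g^{(j)}(u'−w)| |g^{(q)}(u'−w')| |g^{(p)}(w−u)| ≤ C₄·γ^{(4/3)M}·γ^{-k/3}, with C₄ depending only on c, B₃, γ. -/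
/-!
For fixed scales `j, q, p`, estimate the propagator of lowest scale `i` in `L^∞`, one of the
other two in `L¹`, and the last one together with `v` by Hölder in `L^{3/2} × L³` (after a
Tonelli swap when the lowest scale sits on the leg `u' - w'`). Translation invariance removes
`z', w', u`, and the triple costs `γ^i γ^{-x} γ^{-y/3}` with `i ≤ x, y`. Summing the geometric
series over `x, y ≥ i` leaves `γ^{-i/3}`, and then over `i ≥ k` leaves `γ^{-k/3}`, uniformly in `N`.
-/

open MeasureTheory Finset
open scoped ENNReal

section Holder

variable {α β E F : Type*} [MeasurableSpace α] [MeasurableSpace β] {μ : Measure α}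
  {ν : Measure β} [NormedAddCommGroup E] [NormedAddCommGroup F]

theorem lintegral_enorm_comp_mul_le {p q : ℝ≥0∞} [p.HolderConjugate q] {f : β → E} {h : β → F}
    {S T : α → β} (hf : AEStronglyMeasurable f ν) (hh : AEStronglyMeasurable h ν)
    (hS : MeasurePreserving S μ ν) (hT : MeasurePreserving T μ ν) :
    ∫⁻ x, ‖f (S x)‖ₑ * ‖h (T x)‖ₑ ∂μ ≤ eLpNorm f p ν * eLpNorm h q ν := by
  have := eLpNorm_le_eLpNorm_mul_eLpNorm_of_nnnorm (hf.comp_measurePreserving hS)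
    (hh.comp_measurePreserving hT) (fun x y => ‖x‖ * ‖y‖) 1 (.of_forall fun x => by simp)
    (p := p) (q := q) (r := 1)
  rw [eLpNorm_comp_measurePreserving hf hS, eLpNorm_comp_measurePreserving hh hT,
    eLpNorm_one_eq_lintegral_enorm] at this
  simpa [enorm_mul] using this

theorem ae_enorm_comp_le_eLpNorm_top {f : β → E} {S : α → β} (hS : MeasurePreserving S μ ν) :
    ∀ᵐ x ∂μ, ‖f (S x)‖ₑ ≤ eLpNorm f ∞ ν :=
  hS.quasiMeasurePreserving.ae <| by
    simpa only [eLpNorm_exponent_top] using ae_le_eLpNormEssSup (f := f)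

end Holder

instance ENNReal.HolderConjugate.instThreeThreeHalves : (3 : ℝ≥0∞).HolderConjugate (3 / 2) := by
  rw [ENNReal.holderConjugate_iff, ENNReal.inv_div (by simp) (by simp), ← one_div,
    ENNReal.div_add_div_same, show (1 : ℝ≥0∞) + 2 = 3 by norm_num]
  exact ENNReal.div_self (by simp) (by simp)

section Loop

variable {G E F : Type*} [MeasurableSpace G] [AddCommGroup G] {μ : Measure G}
  [NormedAddCommGroup E] [NormedAddCommGroup F]

noncomputable def loopIntegral (μ : Measure G) (v : G → E) (g₁ g₂ g₃ : G → F) (z' w' u : G) :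
    ℝ≥0∞ :=
  ∫⁻ u', ∫⁻ w, ‖v (u' - z')‖ₑ * ‖g₁ (u' - w)‖ₑ * ‖g₂ (u' - w')‖ₑ * ‖g₃ (w - u)‖ₑ ∂μ ∂μ

theorem loopIntegral_eq_lintegral_ofReal (μ : Measure G) (v : G → E) (g₁ g₂ g₃ : G → F)
    (z' w' u : G) :
    loopIntegral μ v g₁ g₂ g₃ z' w' u = ∫⁻ u', ∫⁻ w,
      .ofReal (‖v (u' - z')‖ * ‖g₁ (u' - w)‖ * ‖g₂ (u' - w')‖ * ‖g₃ (w - u)‖) ∂μ ∂μ := by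
  simp only [loopIntegral, ENNReal.ofReal_mul' (norm_nonneg _), ofReal_norm]

variable [MeasurableAdd₂ G] [MeasurableNeg G] [μ.IsAddLeftInvariant] {v : G → E} {g₁ g₂ g₃ : G → F}

theorem loopIntegral_le_mul_eLpNorm [μ.IsNegInvariant] {p q p' q' : ℝ≥0∞} [p.HolderConjugate q]
    [p'.HolderConjugate q'] (hv : AEStronglyMeasurable v μ) (h₁ : AEStronglyMeasurable g₁ μ)
    (h₂ : AEStronglyMeasurable g₂ μ) (h₃ : AEStronglyMeasurable g₃ μ) (z' w' u : G) :
    loopIntegral μ v g₁ g₂ g₃ z' w' u ≤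
      eLpNorm g₁ p' μ * eLpNorm g₃ q' μ * (eLpNorm v p μ * eLpNorm g₂ q μ) := by
  set K := eLpNorm g₁ p' μ * eLpNorm g₃ q' μ
  have inner (u' : G) : ∫⁻ w, ‖g₁ (u' - w)‖ₑ * ‖g₃ (w - u)‖ₑ ∂μ ≤ K :=
    lintegral_enorm_comp_mul_le h₁ h₃ (Measure.measurePreserving_sub_left μ u')
      (measurePreserving_sub_right μ u)
  have hmeas : AEMeasurable (fun u' => ‖v (u' - z')‖ₑ * ‖g₂ (u' - w')‖ₑ) μ :=
    (hv.comp_measurePreserving (measurePreserving_sub_right μ z')).enorm.mul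
      (h₂.comp_measurePreserving (measurePreserving_sub_right μ w')).enorm
  calc loopIntegral μ v g₁ g₂ g₃ z' w' u
      = ∫⁻ u', ‖v (u' - z')‖ₑ * ‖g₂ (u' - w')‖ₑ *
          ∫⁻ w, ‖g₁ (u' - w)‖ₑ * ‖g₃ (w - u)‖ₑ ∂μ ∂μ := by
        refine lintegral_congr fun u' => ?_
        rw [← lintegral_const_mul' _ _ (ENNReal.mul_ne_top enorm_ne_top enorm_ne_top)]
        exact lintegral_congr fun w => by ring
    _ ≤ ∫⁻ u', ‖v (u' - z')‖ₑ * ‖g₂ (u' - w')‖ₑ * K ∂μ := by gcongr with u'; exact inner u'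
    _ = K * ∫⁻ u', ‖v (u' - z')‖ₑ * ‖g₂ (u' - w')‖ₑ ∂μ := by
        rw [lintegral_mul_const'' _ hmeas, mul_comm]
    _ ≤ K * (eLpNorm v p μ * eLpNorm g₂ q μ) := by
        gcongr
        exact lintegral_enorm_comp_mul_le hv h₂ (measurePreserving_sub_right μ z')
          (measurePreserving_sub_right μ w')

theorem loopIntegral_le_eLpNorm_top_mul [SFinite μ] {p q : ℝ≥0∞} [p.HolderConjugate q]
    (hv : AEStronglyMeasurable v μ) (h₁ : AEStronglyMeasurable g₁ μ)
    (h₂ : AEStronglyMeasurable g₂ μ) (h₃ : AEStronglyMeasurable g₃ μ) (z' w' u : G) :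
    loopIntegral μ v g₁ g₂ g₃ z' w' u ≤
      eLpNorm g₂ ∞ μ * eLpNorm g₃ 1 μ * (eLpNorm v p μ * eLpNorm g₁ q μ) := by
  have hv' := (hv.comp_measurePreserving (measurePreserving_sub_right μ z')).enorm
  have h₃' : AEMeasurable (fun w => ‖g₃ (w - u)‖ₑ) μ :=
    (h₃.comp_measurePreserving (measurePreserving_sub_right μ u)).enorm
  have inner (w : G) :
      ∫⁻ u', ‖v (u' - z')‖ₑ * ‖g₁ (u' - w)‖ₑ * ‖g₂ (u' - w')‖ₑ ∂μ ≤
        eLpNorm g₂ ∞ μ * (eLpNorm v p μ * eLpNorm g₁ q μ) := by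
    have hmeas : AEMeasurable (fun u' => ‖v (u' - z')‖ₑ * ‖g₁ (u' - w)‖ₑ) μ :=
      hv'.mul (h₁.comp_measurePreserving (measurePreserving_sub_right μ w)).enorm
    calc ∫⁻ u', ‖v (u' - z')‖ₑ * ‖g₁ (u' - w)‖ₑ * ‖g₂ (u' - w')‖ₑ ∂μ
        ≤ ∫⁻ u', ‖v (u' - z')‖ₑ * ‖g₁ (u' - w)‖ₑ * eLpNorm g₂ ∞ μ ∂μ :=
          lintegral_mono_ae <| (ae_enorm_comp_le_eLpNorm_top
            (measurePreserving_sub_right μ w')).mono fun u' hu' => by gcongr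
      _ = eLpNorm g₂ ∞ μ * ∫⁻ u', ‖v (u' - z')‖ₑ * ‖g₁ (u' - w)‖ₑ ∂μ := by
          rw [lintegral_mul_const'' _ hmeas, mul_comm]
      _ ≤ eLpNorm g₂ ∞ μ * (eLpNorm v p μ * eLpNorm g₁ q μ) := by
          gcongr
          exact lintegral_enorm_comp_mul_le hv h₁ (measurePreserving_sub_right μ z')
            (measurePreserving_sub_right μ w)
  have hmeas : AEMeasurable (Function.uncurry fun u' w =>
      ‖v (u' - z')‖ₑ * ‖g₁ (u' - w)‖ₑ * ‖g₂ (u' - w')‖ₑ * ‖g₃ (w - u)‖ₑ) (μ.prod μ) :=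
    ((hv'.comp_fst.mul (h₁.comp_quasiMeasurePreserving
      (quasiMeasurePreserving_sub_of_right_invariant μ μ)).enorm).mul
      (h₂.comp_measurePreserving (measurePreserving_sub_right μ w')).enorm.comp_fst).mul
      h₃'.comp_snd
  calc loopIntegral μ v g₁ g₂ g₃ z' w' u
      = ∫⁻ w, ‖g₃ (w - u)‖ₑ *
          ∫⁻ u', ‖v (u' - z')‖ₑ * ‖g₁ (u' - w)‖ₑ * ‖g₂ (u' - w')‖ₑ ∂μ ∂μ := by
        rw [loopIntegral, lintegral_lintegral_swap hmeas]
        refine lintegral_congr fun w => ?_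
        rw [← lintegral_const_mul' _ _ enorm_ne_top]
        exact lintegral_congr fun u' => by ring
    _ ≤ ∫⁻ w, ‖g₃ (w - u)‖ₑ * (eLpNorm g₂ ∞ μ * (eLpNorm v p μ * eLpNorm g₁ q μ)) ∂μ := by
        gcongr with w; exact inner w
    _ = eLpNorm g₃ 1 μ * (eLpNorm g₂ ∞ μ * (eLpNorm v p μ * eLpNorm g₁ q μ)) := by
        rw [lintegral_mul_const'' _ h₃', eLpNorm_one_eq_lintegral_enorm,
          lintegral_sub_right_eq_self (fun x => ‖g₃ x‖ₑ) u]
    _ = _ := by ring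

end Loop

theorem sum_zpow_le_of_forall_le {b : ℝ} (h0 : 0 < b) (h1 : b < 1) {s : Finset ℤ} {i : ℤ}
    (hs : ∀ x ∈ s, i ≤ x) : ∑ x ∈ s, b ^ x ≤ b ^ i / (1 - b) := by
  have hshift : ∀ x ∈ s, b ^ x = b ^ i * b ^ (x - i).toNat := fun x hx => by
    rw [← zpow_natCast, ← zpow_add₀ h0.ne', Int.toNat_of_nonneg (by linarith [hs x hx])]
    ring_nf
  have hinj : Set.InjOn (fun x => (x - i).toNat) s := fun x hx y hy hxy => by
    have := hs x hx; have := hs y hy; simp only at hxy; omega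
  calc ∑ x ∈ s, b ^ x = b ^ i * ∑ n ∈ s.image (fun x => (x - i).toNat), b ^ n := by
        rw [sum_image hinj, mul_sum]; exact sum_congr rfl hshift
    _ ≤ b ^ i * ∑' n : ℕ, b ^ n := by
        gcongr
        exact Summable.sum_le_tsum _ (fun n _ => by positivity)
          (summable_geometric_of_lt_one h0.le h1)
    _ = b ^ i / (1 - b) := by rw [tsum_geometric_of_lt_one h0.le h1, div_eq_mul_inv]

/-- With `a = γ^{-1/3}`, `a ^ (3 * x + y - 3 * i) = γ^i γ^{-x} γ^{-y/3}`: the cost of a loop whose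
lowest scale `i` is taken in `L^∞`, scale `x` in `L¹` and scale `y` in `L^{3/2}`. -/
noncomputable def scaleWeight (a : ℝ) (i x y : ℤ) : ℝ :=
  if i ≤ x ∧ i ≤ y then a ^ (3 * x + y - 3 * i) else 0

/-- One term for each of `j`, `p`, `q` being the lowest scale. -/
noncomputable def loopWeight (a : ℝ) (j q p : ℤ) : ℝ :=
  scaleWeight a j p q + scaleWeight a p j q + scaleWeight a q p j

theorem scaleWeight_nonneg {a : ℝ} (ha : 0 < a) (i x y : ℤ) : 0 ≤ scaleWeight a i x y := by
  unfold scaleWeight; split_ifs <;> positivity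

theorem loopWeight_nonneg {a : ℝ} (ha : 0 < a) (j q p : ℤ) : 0 ≤ loopWeight a j q p := by
  have := scaleWeight_nonneg ha; unfold loopWeight; linarith [this j p q, this p j q, this q p j]

theorem sum_sum_scaleWeight_le {a : ℝ} (h0 : 0 < a) (h1 : a < 1) (s : Finset ℤ) (i : ℤ) :
    ∑ x ∈ s, ∑ y ∈ s, scaleWeight a i x y ≤ a ^ i / ((1 - a ^ 3) * (1 - a)) := by
  have h30 : 0 < a ^ 3 := by positivity
  have h31 : a ^ 3 < 1 := pow_lt_one₀ h0.le h1 (by norm_num)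
  have hsplit : ∀ x y, scaleWeight a i x y =
      a ^ (-3 * i) * ((if i ≤ x then (a ^ 3) ^ x else 0) * (if i ≤ y then a ^ y else 0)) := by
    intro x y
    rw [scaleWeight, ite_zero_mul_ite_zero, mul_ite, mul_zero]
    congr 1
    rw [← zpow_natCast, ← zpow_mul, ← zpow_add₀ h0.ne', ← zpow_add₀ h0.ne']
    ring_nf
  calc ∑ x ∈ s, ∑ y ∈ s, scaleWeight a i x y
      = a ^ (-3 * i) * ((∑ x ∈ s with i ≤ x, (a ^ 3) ^ x) * ∑ y ∈ s with i ≤ y, a ^ y) := by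
        simp only [hsplit, ← mul_sum, sum_mul_sum, sum_filter]
    _ ≤ a ^ (-3 * i) * ((a ^ 3) ^ i / (1 - a ^ 3) * (a ^ i / (1 - a))) := by
        have hx := sum_zpow_le_of_forall_le h30 h31 (s := s.filter (i ≤ ·)) (i := i)
          (fun x hx => (mem_filter.mp hx).2)
        have hy := sum_zpow_le_of_forall_le h0 h1 (s := s.filter (i ≤ ·)) (i := i)
          (fun x hx => (mem_filter.mp hx).2)
        gcongr
    _ = a ^ i / ((1 - a ^ 3) * (1 - a)) := by
        have hcancel : a ^ (-3 * i) * (a ^ 3) ^ i = 1 := by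
          rw [← zpow_natCast, ← zpow_mul, ← zpow_add₀ h0.ne']; simp
        rw [div_mul_div_comm, ← mul_div_assoc, ← mul_assoc, hcancel, one_mul]

theorem sum_scaleWeight_le {a : ℝ} (h0 : 0 < a) (h1 : a < 1) {s : Finset ℤ} {k : ℤ}
    (hs : ∀ i ∈ s, k ≤ i) :
    ∑ i ∈ s, ∑ x ∈ s, ∑ y ∈ s, scaleWeight a i x y ≤ a ^ k / ((1 - a ^ 3) * (1 - a) * (1 - a)) := by
  have h31 : a ^ 3 < 1 := pow_lt_one₀ h0.le h1 (by norm_num)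
  calc ∑ i ∈ s, ∑ x ∈ s, ∑ y ∈ s, scaleWeight a i x y
      ≤ ∑ i ∈ s, a ^ i / ((1 - a ^ 3) * (1 - a)) :=
        sum_le_sum fun i _ => sum_sum_scaleWeight_le h0 h1 s i
    _ = (∑ i ∈ s, a ^ i) / ((1 - a ^ 3) * (1 - a)) := by rw [sum_div]
    _ ≤ a ^ k / (1 - a) / ((1 - a ^ 3) * (1 - a)) := by
        have hpos : 0 < (1 - a ^ 3) * (1 - a) := mul_pos (by linarith) (by linarith)
        exact div_le_div_of_nonneg_right (sum_zpow_le_of_forall_le h0 h1 hs) hpos.le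
    _ = a ^ k / ((1 - a ^ 3) * (1 - a) * (1 - a)) := by rw [div_div, mul_comm (1 - a)]

theorem sum_loopWeight_eq (a : ℝ) (s : Finset ℤ) :
    ∑ j ∈ s, ∑ q ∈ s, ∑ p ∈ s, loopWeight a j q p =
      3 * ∑ i ∈ s, ∑ x ∈ s, ∑ y ∈ s, scaleWeight a i x y := by
  simp only [loopWeight, sum_add_distrib]
  rw [sum_congr rfl fun j _ => sum_comm (s := s) (t := s) (f := fun q p => scaleWeight a j p q)]
  rw [sum_congr rfl fun j _ => sum_comm (s := s) (t := s) (f := fun q p => scaleWeight a p j q),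
    sum_comm (s := s) (t := s) (f := fun j p => ∑ q ∈ s, scaleWeight a p j q)]
  rw [sum_comm (s := s) (t := s) (f := fun j q => ∑ p ∈ s, scaleWeight a q p j),
    sum_congr rfl fun q _ => sum_comm (s := s) (t := s) (f := fun j p => scaleWeight a q p j)]
  ring

theorem mul_le_ofReal_scaleWeight {a c W : ℝ} (ha : 0 < a) (hc : 0 ≤ c) (hW : 0 ≤ W)
    {i x y : ℤ} (hix : i ≤ x) (hiy : i ≤ y) {A₁ A₂ A₃ V : ℝ≥0∞}
    (h₁ : A₁ ≤ .ofReal (c * a ^ (-3 * i))) (h₂ : A₂ ≤ .ofReal (c * a ^ (3 * x)))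
    (hV : V ≤ .ofReal W) (h₃ : A₃ ≤ .ofReal (c * a ^ y)) :
    A₁ * A₂ * (V * A₃) ≤ .ofReal (c ^ 3 * W * scaleWeight a i x y) := by
  calc A₁ * A₂ * (V * A₃)
      ≤ .ofReal (c * a ^ (-3 * i)) * .ofReal (c * a ^ (3 * x)) *
          (.ofReal W * .ofReal (c * a ^ y)) := by
        gcongr
    _ = .ofReal (c ^ 3 * W * scaleWeight a i x y) := by
        rw [← ENNReal.ofReal_mul (by positivity), ← ENNReal.ofReal_mul hW,
          ← ENNReal.ofReal_mul (by positivity), scaleWeight, if_pos ⟨hix, hiy⟩,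
          show 3 * x + y - 3 * i = -3 * i + 3 * x + y by ring, zpow_add₀ ha.ne',
          zpow_add₀ ha.ne']
        ring_nf

section Scales

variable {G F : Type*} [MeasurableSpace G] [NormedAddCommGroup F]

/-- With `a = γ^{-1/3}` these are the bounds `‖f‖_∞ ≤ c γ^j`, `‖f‖_1 ≤ c γ^{-j}`,
`‖f‖_{3/2} ≤ c γ^{-j/3}` of a propagator of scale `j`. -/
def IsScaleBounded (μ : Measure G) (a c : ℝ) (j : ℤ) (f : G → F) : Prop :=
  eLpNorm f ∞ μ ≤ .ofReal (c * a ^ (-3 * j)) ∧ eLpNorm f 1 μ ≤ .ofReal (c * a ^ (3 * j)) ∧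
    eLpNorm f (3 / 2) μ ≤ .ofReal (c * a ^ j)

theorem rpow_neg_one_third_zpow {γ : ℝ} (hγ : 0 < γ) (n : ℤ) :
    (γ ^ (-(1 / 3) : ℝ)) ^ n = γ ^ (-(n : ℝ) / 3) := by
  rw [← Real.rpow_intCast, ← Real.rpow_mul hγ.le]; ring_nf

theorem isScaleBounded_rpow_neg_one_third {μ : Measure G} {γ c : ℝ} (hγ : 0 < γ) {j : ℤ}
    {f : G → F} (h : eLpNorm f ∞ μ ≤ .ofReal (c * γ ^ j) ∧
      eLpNorm f 1 μ ≤ .ofReal (c * γ ^ (-j)) ∧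
      eLpNorm f (3 / 2) μ ≤ .ofReal (c * γ ^ (-(j : ℝ) / 3))) :
    IsScaleBounded μ (γ ^ (-(1 / 3) : ℝ)) c j f := by
  obtain ⟨htop, hone, hthree⟩ := h
  simp only [IsScaleBounded, rpow_neg_one_third_zpow hγ]
  refine ⟨?_, ?_, hthree⟩
  · rwa [show -(((-3 * j : ℤ)) : ℝ) / 3 = (j : ℤ) by push_cast; ring, Real.rpow_intCast]
  · rwa [show -(((3 * j : ℤ)) : ℝ) / 3 = (-j : ℤ) by push_cast; ring, Real.rpow_intCast]

variable [AddCommGroup G] [MeasurableAdd₂ G] [MeasurableNeg G] {μ : Measure G}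
  [μ.IsAddLeftInvariant] [μ.IsNegInvariant] [SFinite μ] {E : Type*} [NormedAddCommGroup E]

theorem loopIntegral_le_ofReal_loopWeight {a c W : ℝ} (ha : 0 < a) (hc : 0 ≤ c) (hW : 0 ≤ W)
    {v : G → E} {g₁ g₂ g₃ : G → F} {j q p : ℤ} (hv : AEStronglyMeasurable v μ)
    (h₁ : AEStronglyMeasurable g₁ μ) (h₂ : AEStronglyMeasurable g₂ μ)
    (h₃ : AEStronglyMeasurable g₃ μ) (hvW : eLpNorm v 3 μ ≤ .ofReal W)
    (b₁ : IsScaleBounded μ a c j g₁) (b₂ : IsScaleBounded μ a c q g₂)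
    (b₃ : IsScaleBounded μ a c p g₃) (z' w' u : G) :
    loopIntegral μ v g₁ g₂ g₃ z' w' u ≤ .ofReal (c ^ 3 * W * loopWeight a j q p) := by
  have hw := scaleWeight_nonneg ha
  obtain hmin | hmin | hmin : (j ≤ q ∧ j ≤ p) ∨ (p ≤ j ∧ p ≤ q) ∨ (q ≤ j ∧ q ≤ p) := by omega
  · calc loopIntegral μ v g₁ g₂ g₃ z' w' u
        ≤ eLpNorm g₁ ∞ μ * eLpNorm g₃ 1 μ * (eLpNorm v 3 μ * eLpNorm g₂ (3 / 2) μ) :=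
          loopIntegral_le_mul_eLpNorm hv h₁ h₂ h₃ z' w' u
      _ ≤ .ofReal (c ^ 3 * W * scaleWeight a j p q) :=
          mul_le_ofReal_scaleWeight ha hc hW hmin.2 hmin.1 b₁.1 b₃.2.1 hvW b₂.2.2
      _ ≤ _ := by unfold loopWeight; gcongr; linarith [hw p j q, hw q p j]
  · calc loopIntegral μ v g₁ g₂ g₃ z' w' u
        ≤ eLpNorm g₃ ∞ μ * eLpNorm g₁ 1 μ * (eLpNorm v 3 μ * eLpNorm g₂ (3 / 2) μ) := by
          rw [mul_comm (eLpNorm g₃ ∞ μ)]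
          exact loopIntegral_le_mul_eLpNorm hv h₁ h₂ h₃ z' w' u
      _ ≤ .ofReal (c ^ 3 * W * scaleWeight a p j q) :=
          mul_le_ofReal_scaleWeight ha hc hW hmin.1 hmin.2 b₃.1 b₁.2.1 hvW b₂.2.2
      _ ≤ _ := by unfold loopWeight; gcongr; linarith [hw j p q, hw q p j]
  · calc loopIntegral μ v g₁ g₂ g₃ z' w' u
        ≤ eLpNorm g₂ ∞ μ * eLpNorm g₃ 1 μ * (eLpNorm v 3 μ * eLpNorm g₁ (3 / 2) μ) :=
          loopIntegral_le_eLpNorm_top_mul hv h₁ h₂ h₃ z' w' u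
      _ ≤ .ofReal (c ^ 3 * W * scaleWeight a q p j) :=
          mul_le_ofReal_scaleWeight ha hc hW hmin.2 hmin.1 b₂.1 b₃.2.1 hvW b₁.2.2
      _ ≤ _ := by unfold loopWeight; gcongr; linarith [hw j p q, hw p j q]

theorem sum_loopIntegral_le {a c W : ℝ} (ha0 : 0 < a) (ha1 : a < 1) (hc : 0 ≤ c) (hW : 0 ≤ W)
    {s : Finset ℤ} {k : ℤ} (hs : ∀ j ∈ s, k ≤ j) {v : G → E} {g : ℤ → G → F}
    (hv : AEStronglyMeasurable v μ) (hg : ∀ j ∈ s, AEStronglyMeasurable (g j) μ)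
    (hvW : eLpNorm v 3 μ ≤ .ofReal W) (hgs : ∀ j ∈ s, IsScaleBounded μ a c j (g j))
    (z' w' u : G) :
    ∑ j ∈ s, ∑ q ∈ s, ∑ p ∈ s, loopIntegral μ v (g j) (g q) (g p) z' w' u ≤
      .ofReal (c ^ 3 * W * (3 * (a ^ k / ((1 - a ^ 3) * (1 - a) * (1 - a))))) := by
  have hnn (j q p : ℤ) : 0 ≤ c ^ 3 * W * loopWeight a j q p := by
    have := loopWeight_nonneg ha0 j q p; positivity
  calc ∑ j ∈ s, ∑ q ∈ s, ∑ p ∈ s, loopIntegral μ v (g j) (g q) (g p) z' w' u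
      ≤ ∑ j ∈ s, ∑ q ∈ s, ∑ p ∈ s, .ofReal (c ^ 3 * W * loopWeight a j q p) := by
        gcongr with j hj q hq p hp
        exact loopIntegral_le_ofReal_loopWeight ha0 hc hW hv (hg j hj) (hg q hq) (hg p hp) hvW
          (hgs j hj) (hgs q hq) (hgs p hp) z' w' u
    _ = .ofReal (∑ j ∈ s, ∑ q ∈ s, ∑ p ∈ s, c ^ 3 * W * loopWeight a j q p) := by
        rw [ENNReal.ofReal_sum_of_nonneg fun j _ => sum_nonneg fun q _ => sum_nonneg fun p _ =>
          hnn j q p]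
        refine sum_congr rfl fun j _ => ?_
        rw [ENNReal.ofReal_sum_of_nonneg fun q _ => sum_nonneg fun p _ => hnn j q p]
        exact sum_congr rfl fun q _ => (ENNReal.ofReal_sum_of_nonneg fun p _ => hnn j q p).symm
    _ ≤ _ := by
        refine ENNReal.ofReal_le_ofReal ?_
        simp only [← mul_sum]
        rw [sum_loopWeight_eq]
        gcongr
        exact sum_scaleWeight_le ha0 ha1 hs

end Scales

/-- The uniform-in-`N` triple-propagator loop estimate: if `‖v‖_{L³} ≤ B₃ γ^{4M/3}`
and the single-scale propagators `g^{(j)}`, `k ≤ j ≤ N`, satisfy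
`‖g^{(j)}‖_∞ ≤ c γ^j`, `‖g^{(j)}‖_{L¹} ≤ c γ^{-j}`, `‖g^{(j)}‖_{L^{3/2}} ≤ c γ^{-j/3}`,
then for all fixed `z', w', u`,
`Σ_{j,q,p=k}^{N} ∫∫ dw du' |v(u'−z')| |g^{(j)}(u'−w)| |g^{(q)}(u'−w')| |g^{(p)}(w−u)|
  ≤ C₄ γ^{4M/3} γ^{-k/3}`, with `C₄` depending only on `c, B₃, γ`. -/
theorem stmt19 (γ c B3 : ℝ) (hγ : 1 < γ) (hc : 0 < c) (hB : 0 < B3) :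
    ∃ C4 > 0, ∀ (M k N : ℤ), k ≤ N →
      ∀ (v : ℝ × ℝ → ℝ) (g : ℤ → ℝ × ℝ → ℂ),
        Measurable v → (∀ j, Measurable (g j)) →
        eLpNorm v 3 volume ≤ ENNReal.ofReal (B3 * γ ^ ((4 : ℝ) / 3 * (M : ℝ))) →
        (∀ j : ℤ, k ≤ j → j ≤ N →
          eLpNorm (g j) ⊤ volume ≤ ENNReal.ofReal (c * γ ^ j) ∧
          eLpNorm (g j) 1 volume ≤ ENNReal.ofReal (c * γ ^ (-j)) ∧
          eLpNorm (g j) (3 / 2) volume ≤ ENNReal.ofReal (c * γ ^ (-(j : ℝ) / 3))) →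
        ∀ z' w' u : ℝ × ℝ,
          ∑ j ∈ Finset.Icc k N, ∑ q ∈ Finset.Icc k N, ∑ p ∈ Finset.Icc k N,
            (∫⁻ u' : ℝ × ℝ, ∫⁻ w : ℝ × ℝ,
              ENNReal.ofReal
                (|v (u' - z')| * ‖g j (u' - w)‖ * ‖g q (u' - w')‖ * ‖g p (w - u)‖))
          ≤ ENNReal.ofReal (C4 * γ ^ ((4 : ℝ) / 3 * (M : ℝ)) * γ ^ (-(k : ℝ) / 3)) := by
  have hγ0 : 0 < γ := by linarith
  set a := γ ^ (-(1 / 3) : ℝ)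
  have ha0 : 0 < a := by positivity
  have ha1 : a < 1 := Real.rpow_lt_one_of_one_lt_of_neg hγ (by norm_num)
  have hD : 0 < (1 - a ^ 3) * (1 - a) * (1 - a) := by
    have := pow_lt_one₀ ha0.le ha1 three_ne_zero
    have := sub_pos.mpr ha1
    exact mul_pos (mul_pos (by linarith) this) this
  refine ⟨c ^ 3 * B3 * (3 / ((1 - a ^ 3) * (1 - a) * (1 - a))),
    mul_pos (by positivity) (div_pos three_pos hD), ?_⟩
  intro M k N _ v g hv hg hvB hgB z' w' u
  simp only [← Real.norm_eq_abs, ← loopIntegral_eq_lintegral_ofReal]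
  calc ∑ j ∈ Icc k N, ∑ q ∈ Icc k N, ∑ p ∈ Icc k N, loopIntegral volume v (g j) (g q) (g p) z' w' u
      ≤ .ofReal (c ^ 3 * (B3 * γ ^ ((4 : ℝ) / 3 * (M : ℝ))) *
          (3 * (a ^ k / ((1 - a ^ 3) * (1 - a) * (1 - a))))) :=
        sum_loopIntegral_le ha0 ha1 hc.le (by positivity) (fun j hj => (mem_Icc.mp hj).1)
          hv.aestronglyMeasurable (fun j _ => (hg j).aestronglyMeasurable) hvB
          (fun j hj => isScaleBounded_rpow_neg_one_third hγ0
            (hgB j (mem_Icc.mp hj).1 (mem_Icc.mp hj).2)) z' w' u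
    _ = _ := by rw [rpow_neg_one_third_zpow hγ0]; congr 1; ring
end
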